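/- Let L be an FDD-lattice and x ∈ L, and write x = ⋁F for a finite subset F ⊆ Cp(L). Then the set η_L(x) = {p ∈ pt(L) : p(x) = 1} equals the upper set ↑{γ_a : a ∈ F} in pt(L), and η_L(x) is a compact-open subset of pt(L) with its Scott topology. -/

import Mathlib

section Domains

variable (P : Type*) [PartialOrder P]

/-- A dcpo: every nonempty directed subset has a least upper bound. -/
def DirectedComplete : Prop :=
  ∀ D : Set P, D.Nonempty → DirectedOn (· ≤ ·) D → ∃ s, IsLUB D s

variable {P}

/-- A compact (finite) element of a poset. -/
def IsCompactElt (k : P) : Prop :=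
  ∀ D : Set P, D.Nonempty → DirectedOn (· ≤ ·) D → ∀ s : P, IsLUB D s → k ≤ s →
    ∃ d ∈ D, k ≤ d

/-- A Scott-open subset: an upper set inaccessible by directed suprema. -/
def ScottOpen (U : Set P) : Prop :=
  IsUpperSet U ∧ ∀ D : Set P, D.Nonempty → DirectedOn (· ≤ ·) D → ∀ s : P, IsLUB D s →
    s ∈ U → (D ∩ U).Nonempty

/-- Compactness of a set with respect to covers by Scott-open sets. -/
def ScottCompactSet (K : Set P) : Prop :=
  ∀ C : Set (Set P), (∀ V ∈ C, ScottOpen V) → K ⊆ ⋃₀ C →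
    ∃ F : Finset (Set P), ↑F ⊆ C ∧ K ⊆ ⋃₀ (F : Set (Set P))

variable (P)

/-- The collection of compact-open subsets (w.r.t. the Scott topology). -/
def CO : Set (Set P) := {U | ScottOpen U ∧ ScottCompactSet U}

/-- An algebraic domain: a dcpo in which, for every `x`, the set of compact elements
below `x` is a (nonempty) directed set with least upper bound `x`. -/
def IsAlgebraicDomain : Prop :=
  DirectedComplete P ∧
  ∀ x : P,
    (Set.Iic x ∩ {k | IsCompactElt k}).Nonempty ∧
    DirectedOn (· ≤ ·) (Set.Iic x ∩ {k | IsCompactElt k}) ∧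
    IsLUB (Set.Iic x ∩ {k | IsCompactElt k}) x

/-- Every principal ideal `↓x` is a complete lattice in the induced order
(equivalently: every subset of `↓x` has a least upper bound inside `↓x`). -/
def PrincipalIdealsComplete : Prop :=
  ∀ x : P, ∀ S : Set P, S ⊆ Set.Iic x →
    ∃ s, s ≤ x ∧ (∀ a ∈ S, a ≤ s) ∧ ∀ u, u ≤ x → (∀ a ∈ S, a ≤ u) → s ≤ u

/-- An algebraic L-domain. -/
def IsAlgebraicLDomain : Prop := IsAlgebraicDomain P ∧ PrincipalIdealsComplete P

/-- The Lawson topology: generated by the Scott-open sets together with complements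
of principal filters. -/
def lawsonTopology : TopologicalSpace P :=
  TopologicalSpace.generateFrom ({U | ScottOpen U} ∪ {U | ∃ x : P, U = (Set.Ici x)ᶜ})

/-- Lawson compactness: compactness in the Lawson topology. -/
def LawsonCompact : Prop := @CompactSpace P (lawsonTopology P)

end Domains

section FDD

variable {L : Type*} [Lattice L] [BoundedOrder L]

/-- A nonzero co-prime element. -/
def CoprimeElt (a : L) : Prop :=
  a ≠ ⊥ ∧ ∀ x y : L, a ≤ x ⊔ y → a ≤ x ∨ a ≤ y

/-- A finitely disjunctive distributive lattice (FDD-lattice): a bounded distributive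
lattice in which (1) every element is a finite join of nonzero co-primes, and
(2) the meet of two nonzero co-primes is a finite join of pairwise disjoint
nonzero co-primes. -/
def IsFDD (L : Type*) [DistribLattice L] [BoundedOrder L] : Prop :=
  (∀ x : L, ∃ F : Finset L, (∀ a ∈ F, CoprimeElt a) ∧ x = F.sup id) ∧
  (∀ a b : L, CoprimeElt a → CoprimeElt b →
    ∃ F : Finset L, (∀ c ∈ F, CoprimeElt c) ∧
      (∀ c ∈ F, ∀ d ∈ F, c ≠ d → c ⊓ d = ⊥) ∧ a ⊓ b = F.sup id)

/-- A point of a bounded lattice: a lattice homomorphism into the two-element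
bounded lattice `Bool` preserving `0`, `1`, binary meets and binary joins. -/
def IsPoint (p : L → Bool) : Prop :=
  p ⊥ = false ∧ p ⊤ = true ∧
  (∀ x y : L, p (x ⊓ y) = (p x && p y)) ∧
  (∀ x y : L, p (x ⊔ y) = (p x || p y))

end FDD

/-- The poset of points of a bounded lattice, with the pointwise order. -/
def Pt (L : Type*) [Lattice L] [BoundedOrder L] : Type _ :=
  {p : L → Bool // IsPoint p}

noncomputable instance (L : Type*) [Lattice L] [BoundedOrder L] : PartialOrder (Pt L) :=
  inferInstanceAs (PartialOrder {p : L → Bool // IsPoint p})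

/-- `γ_a : L → {0,1}`, `γ_a x = 1` iff `a ≤ x`. -/
noncomputable def gammaPt {L : Type*} [Lattice L] [BoundedOrder L] (a : L) : L → Bool :=
  fun x => @decide (a ≤ x) (Classical.propDecidable _)

/-- A bounded lattice homomorphism. -/
def IsBLH {L M : Type*} [Lattice L] [BoundedOrder L] [Lattice M] [BoundedOrder M]
    (f : L → M) : Prop :=
  f ⊥ = ⊥ ∧ f ⊤ = ⊤ ∧ (∀ x y, f (x ⊓ y) = f x ⊓ f y) ∧ (∀ x y, f (x ⊔ y) = f x ⊔ f y)

/-!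
A point `p` lies above `γ_a` exactly when `p a = 1`, and `p (⋁ F) = 1` exactly when `p a = 1`
for some `a ∈ F`; hence `η_L(x)` is the upper closure of the finitely many points `γ_a`,
`a ∈ F` (these are points because each `a` is co-prime). An upper closure of a finite set is
Scott compact, and `η_L(x)` is Scott open because directed suprema of points are computed
pointwise.
-/

section ScottCompact

variable {P : Type*} [PartialOrder P]

theorem scottCompactSet_upperClosure {S : Set P} (hS : S.Finite) :
    ScottCompactSet (upperClosure S : Set P) := by
  intro C hC hcover
  have hcovered : ∀ s : S, ∃ V ∈ C, (s : P) ∈ V := fun s => by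
    simpa using hcover (subset_upperClosure s.2)
  choose V hVC hsV using hcovered
  have := hS.to_subtype
  refine ⟨(Set.finite_range V).toFinset, by simpa [Set.range_subset_iff] using hVC, ?_⟩
  rintro p ⟨s, hs, hsp⟩
  simp only [Set.Finite.coe_toFinset, Set.mem_sUnion, Set.exists_range_iff]
  exact ⟨⟨s, hs⟩, (hC _ (hVC _)).1 hsp (hsV _)⟩

end ScottCompact

theorem gammaPt_eq_true {L : Type*} [Lattice L] [BoundedOrder L] {a y : L} :
    gammaPt a y = true ↔ a ≤ y := by
  simp [gammaPt]

namespace IsPoint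

variable {L : Type*} [Lattice L] [BoundedOrder L] {p : L → Bool}

theorem monotone (hp : IsPoint p) : Monotone p := fun a b hab => by
  rw [← inf_eq_left.mpr hab, hp.2.2.1]
  exact Bool.and_le_right _ _

theorem apply_finset_sup_eq_true {ι : Type*} (hp : IsPoint p) (s : Finset ι) (f : ι → L) :
    p (s.sup f) = true ↔ ∃ i ∈ s, p (f i) = true := by
  classical
  induction s using Finset.induction_on with
  | empty => simp [hp.1]
  | insert i s _ ih => simp [hp.2.2.2, ih]

theorem gammaPt_le_iff (hp : IsPoint p) {a : L} : gammaPt a ≤ p ↔ p a = true := by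
  refine ⟨fun h => Bool.le_iff_imp.mp (h a) (gammaPt_eq_true.mpr le_rfl), fun ha y => ?_⟩
  exact Bool.le_iff_imp.mpr fun hy => Bool.le_iff_imp.mp (hp.monotone (gammaPt_eq_true.mp hy)) ha

end IsPoint

section Points

variable {L : Type*} [Lattice L] [BoundedOrder L]

theorem isPoint_gammaPt {a : L} (ha : CoprimeElt a) : IsPoint (gammaPt a) := by
  refine ⟨by simpa [gammaPt] using ha.1, by simp [gammaPt], fun x y => ?_, fun x y => ?_⟩
  · rw [Bool.eq_iff_iff]
    simp [gammaPt_eq_true]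
  · have hsup : a ≤ x ⊔ y ↔ a ≤ x ∨ a ≤ y :=
      ⟨ha.2 x y, fun h => h.elim le_sup_of_le_left le_sup_of_le_right⟩
    rw [Bool.eq_iff_iff]
    simp [gammaPt_eq_true, hsup]

noncomputable def gammaPoint {a : L} (ha : CoprimeElt a) : Pt L := ⟨gammaPt a, isPoint_gammaPt ha⟩

open Classical in
noncomputable def pointwiseSup (D : Set (Pt L)) : L → Bool := fun y => ∃ p ∈ D, p.1 y = true

theorem pointwiseSup_eq_true {D : Set (Pt L)} {y : L} :
    pointwiseSup D y = true ↔ ∃ p ∈ D, p.1 y = true := by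
  simp [pointwiseSup]

theorem isPoint_pointwiseSup {D : Set (Pt L)} (hne : D.Nonempty)
    (hdir : DirectedOn (· ≤ ·) D) : IsPoint (pointwiseSup D) := by
  refine ⟨?_, ?_, fun x y => ?_, fun x y => ?_⟩
  · simp [pointwiseSup, fun p : Pt L => p.2.1]
  · obtain ⟨p, hp⟩ := hne
    exact pointwiseSup_eq_true.mpr ⟨p, hp, p.2.2.1⟩
  · rw [Bool.eq_iff_iff, Bool.and_eq_true]
    simp only [pointwiseSup_eq_true, fun p : Pt L => p.2.2.2.1 x y, Bool.and_eq_true]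
    refine ⟨fun ⟨p, hp, hx, hy⟩ => ⟨⟨p, hp, hx⟩, ⟨p, hp, hy⟩⟩, ?_⟩
    rintro ⟨⟨p, hp, hx⟩, ⟨q, hq, hy⟩⟩
    obtain ⟨r, hr, hpr, hqr⟩ := hdir p hp q hq
    exact ⟨r, hr, Bool.le_iff_imp.mp (hpr x) hx, Bool.le_iff_imp.mp (hqr y) hy⟩
  · rw [Bool.eq_iff_iff, Bool.or_eq_true]
    simp only [pointwiseSup_eq_true, fun p : Pt L => p.2.2.2.2 x y, Bool.or_eq_true, and_or_left,
      exists_or]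

theorem scottOpen_setOf_apply_eq_true (x : L) : ScottOpen {p : Pt L | p.1 x = true} := by
  refine ⟨fun p q hpq hp => Bool.le_iff_imp.mp (hpq x) hp, ?_⟩
  intro D hne hdir s hs hsx
  have hub : (⟨_, isPoint_pointwiseSup hne hdir⟩ : Pt L) ∈ upperBounds D := fun p hp y =>
    Bool.le_iff_imp.mpr fun hpy => pointwiseSup_eq_true.mpr ⟨p, hp, hpy⟩
  have hsup : s.1 ≤ pointwiseSup D := hs.2 hub
  exact pointwiseSup_eq_true.mp (Bool.le_iff_imp.mp (hsup x) hsx)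

end Points

theorem stmt12_general {L : Type*} [DistribLattice L] [BoundedOrder L]
    (x : L) (F : Finset L) (hF : ∀ a ∈ F, CoprimeElt a) (hx : x = F.sup id) :
    {p : Pt L | p.1 x = true} = {p : Pt L | ∃ a ∈ F, gammaPt a ≤ p.1} ∧
    {p : Pt L | p.1 x = true} ∈ CO (Pt L) := by
  have heta : {p : Pt L | p.1 x = true} = {p : Pt L | ∃ a ∈ F, gammaPt a ≤ p.1} := by
    ext p
    simp [hx, p.2.apply_finset_sup_eq_true, p.2.gammaPt_le_iff]
  have hclosure : {p : Pt L | p.1 x = true} =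
      upperClosure (Set.range fun a : F => gammaPoint (hF a a.2)) := by
    ext p
    simp only [heta, Set.mem_ofPred_eq, SetLike.mem_coe, mem_upperClosure, Set.exists_range_iff,
      Subtype.exists]
    exact ⟨fun ⟨a, ha, h⟩ => ⟨a, ha, h⟩, fun ⟨a, ha, h⟩ => ⟨a, ha, h⟩⟩
  refine ⟨heta, scottOpen_setOf_apply_eq_true x, ?_⟩
  rw [hclosure]
  exact scottCompactSet_upperClosure (Set.finite_range _)

/-- For an FDD-lattice `L` and `x = ⋁F` with `F` a finite set of nonzero
co-primes, the set `η_L(x) = {p ∈ Pt L : p x = 1}` equals the upper set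
`↑{γ_a : a ∈ F}` in `Pt L`, and `η_L(x)` is compact-open in the Scott topology. -/
theorem stmt12 {L : Type*} [DistribLattice L] [BoundedOrder L] (hL : IsFDD L)
    (x : L) (F : Finset L) (hF : ∀ a ∈ F, CoprimeElt a) (hx : x = F.sup id) :
    {p : Pt L | p.1 x = true} = {p : Pt L | ∃ a ∈ F, gammaPt a ≤ p.1} ∧
    {p : Pt L | p.1 x = true} ∈ CO (Pt L) :=
  stmt12_general x F hF hx
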